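/- arXiv:1508.03934 — 11 statements merged into one kernel-verified Lean document; each statement's English description precedes it below -/
import Mathlib

section
/- Let G be an arbitrary group and let A be a finite subset of G which does not contain any left coset or right coset of any nontrivial proper finite subgroup of G. Then for every finite subset B of G with |A| = |B| and e ∉ B, there exists a matching from A to B. -/
/-!
By Hall's theorem it suffices that every `S ⊆ A` has at least `|S|` partners `b ∈ B` with
`S b ⊄ A`. If the set `N` of partners were smaller, then `S T ⊆ A` for `T = {e} ∪ (B \ N)`,
although `|S| + |T| ≥ |A| + 2`. An Olson-type inequality rules this out: if `S T ⊆ C` and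
`|S| + |T| ≥ |C| + 2`, then `C` contains a coset of a nontrivial finite subgroup. It is proved
by DeVos's e-transform induction, as in Mathlib's proof of the Cauchy–Davenport theorem for
arbitrary groups. A coset of the whole group inside `A` would force `A = G = B ∋ e`.
-/

/-- A matching from a finite subset `A` to a finite subset `B` of a group `G` is a
bijection `f : A → B` such that `a * f a ∉ A` for all `a ∈ A`. -/
def IsMatching {G : Type*} [Group G] (A B : Finset G) (f : ↥A ≃ ↥B) : Prop :=
  ∀ a : ↥A, (a : G) * (f a : G) ∉ A

open Finset MulOpposite
open scoped Pointwise

section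

variable {G : Type*} [Group G]

/-- Every coset of a subgroup has the form `x * H * y`, and `x * H * y = (x * y) * (y⁻¹ * H * y)`
is a left coset of a conjugate of `H`; unlike one-sided cosets, these sets are closed under
inversion. -/
def ContainsNontrivialCoset (C : Set G) : Prop :=
  ∃ H : Subgroup G, H ≠ ⊥ ∧ ∃ x y : G, (fun h ↦ x * h * y) '' (H : Set G) ⊆ C

namespace ContainsNontrivialCoset

theorem of_inv {C : Set G} (hC : ContainsNontrivialCoset C⁻¹) : ContainsNontrivialCoset C := by
  obtain ⟨H, hH, x, y, hsub⟩ := hC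
  refine ⟨H, hH, y⁻¹, x⁻¹, ?_⟩
  rintro _ ⟨h, hh, rfl⟩
  have : x * h⁻¹ * y ∈ C⁻¹ := hsub ⟨h⁻¹, H.inv_mem hh, rfl⟩
  simpa [mul_assoc] using this

theorem exists_smul_subset {C : Set G} (hC : ContainsNontrivialCoset C) :
    ∃ K : Subgroup G, K ≠ ⊥ ∧ ∃ z : G, z • (K : Set G) ⊆ C := by
  obtain ⟨H, hH, x, y, hsub⟩ := hC
  refine ⟨MulAut.conj y⁻¹ • H, fun hK ↦ hH ?_, x * y, ?_⟩
  · rwa [← Subgroup.smul_bot (MulAut.conj y⁻¹), smul_left_cancel_iff] at hK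
  · rintro _ ⟨k, hk, rfl⟩
    rw [SetLike.mem_coe, Subgroup.mem_pointwise_smul_iff_inv_smul_mem] at hk
    have : x * (y * k * y⁻¹) * y ∈ C := hsub ⟨_, by simpa using hk, rfl⟩
    simpa [mul_assoc] using this

variable [DecidableEq G]

theorem of_op_smul_eq {s t C : Finset G} {g a b : G} (hg : g ≠ 1) (ha : a ∈ s)
    (hsg : op g • s = s) (hb : b ∈ t) (hst : s * t ⊆ C) : ContainsNontrivialCoset (C : Set G) := by
  refine ⟨Subgroup.zpowers g, Subgroup.zpowers_ne_bot.2 hg, a, b, ?_⟩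
  rintro _ ⟨_, ⟨n, rfl⟩, rfl⟩
  have hstab : op g ^ n • s = s := by
    have : op g ∈ MulAction.stabilizer Gᵐᵒᵖ s := hsg
    exact Subgroup.zpow_mem _ this n
  have : a * g ^ n ∈ s := by
    rw [← hstab, ← op_zpow]
    exact smul_mem_smul_finset ha
  exact_mod_cast hst (mul_mem_mul this hb)

theorem of_mul_subset {s t C : Finset G} (hs : s.Nonempty) (ht : t.Nonempty)
    (hst : s * t ⊆ C) (hcard : #C + 2 ≤ #s + #t) : ContainsNontrivialCoset (C : Set G) := by
  have htC : #t ≤ #C := (card_le_card_mul_left hs).trans (card_le_card hst)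
  -- Inversion swaps the roles of `s` and `t`; `#s ≤ #t` makes `t ∩ g⁻¹ • t` nonempty below.
  obtain hts | hs_le_t := lt_or_ge #t #s
  · refine of_inv ?_
    rw [← coe_inv]
    refine of_mul_subset ht.inv hs.inv ?_ (by simpa [card_inv, add_comm] using hcard)
    rw [← mul_inv_rev]
    exact inv_subset_inv hst
  obtain ⟨a, rfl⟩ | ⟨a, ha, b, hb, hab⟩ := hs.exists_eq_singleton_or_nontrivial
  · rw [card_singleton] at hcard
    omega
  obtain ⟨g, hg, ha'⟩ : ∃ g : G, g ≠ 1 ∧ a ∈ op g • s :=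
    ⟨b⁻¹ * a, inv_mul_eq_one.not.2 hab.symm, mem_smul_finset.2 ⟨b, hb, by simp⟩⟩
  obtain hsg | hsg := eq_or_ne (op g • s) s
  · obtain ⟨c, hc⟩ := ht
    exact of_op_smul_eq hg ha hsg hc hst
  -- DeVos's e-transforms: both keep the product inside `s * t`, and their size sums average `#s + #t`.
  have hs_lt : #(s ∩ op g • s) < #s := card_lt_card ⟨inter_subset_left, fun h ↦
    hsg <| eq_of_superset_of_card_ge (h.trans inter_subset_right) (card_smul_finset _ _).le⟩
  have hs_card : #(s ∩ op g • s) + #(s ∪ op g • s) = 2 * #s := mulETransformLeft.card g (s, t)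
  have ht_card : #(t ∪ g⁻¹ • t) + #(t ∩ g⁻¹ • t) = 2 * #t := mulETransformRight.card g (s, t)
  have ha_mem : a ∈ s ∩ op g • s := mem_inter.2 ⟨ha, ha'⟩
  by_cases hL : #s + #t ≤ #(s ∩ op g • s) + #(t ∪ g⁻¹ • t)
  · have hsub : (s ∩ op g • s) * (t ∪ g⁻¹ • t) ⊆ C :=
      (mulETransformLeft.fst_mul_snd_subset g (s, t)).trans hst
    exact of_mul_subset ⟨a, ha_mem⟩ (ht.mono subset_union_left) hsub (by omega)
  · have ht' : (t ∩ g⁻¹ • t).Nonempty := by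
      rw [nonempty_iff_ne_empty]
      intro he
      rw [he, card_empty] at ht_card
      have := card_pos.2 ⟨a, ha_mem⟩
      omega
    have hsub : (s ∪ op g • s) * (t ∩ g⁻¹ • t) ⊆ C :=
      (mulETransformRight.fst_mul_snd_subset g (s, t)).trans hst
    have : #(s ∪ op g • s) + #(t ∩ g⁻¹ • t) ≤ 2 * #C := by
      have := (card_le_card_mul_right ht').trans (card_le_card hsub)
      have := card_le_card (inter_subset_left : t ∩ g⁻¹ • t ⊆ t)
      omega
    exact of_mul_subset (hs.mono subset_union_left) ht' hsub (by omega)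
termination_by (2 * #C - (#s + #t), #s)
decreasing_by all_goals simp only [Prod.lex_def, card_inv]; omega

end ContainsNontrivialCoset

variable [DecidableEq G] {A B : Finset G}

theorem exists_isMatching_of_forall_card_le (hcard : #A = #B)
    (hall : ∀ S : Finset A, #S ≤ #(S.biUnion fun a ↦ {b ∈ B | (a : G) * b ∉ A})) :
    ∃ f : A ≃ B, IsMatching A B f := by
  obtain ⟨f, hf_inj, hf⟩ := (all_card_le_biUnion_card_iff_exists_injective _).1 hall
  let f' : A → B := fun a ↦ ⟨f a, (mem_filter.1 (hf a)).1⟩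
  have hf' : Function.Bijective f' := (Fintype.bijective_iff_injective_and_card f').2
    ⟨fun a b h ↦ hf_inj (congrArg Subtype.val h), by simpa using hcard⟩
  exact ⟨Equiv.ofBijective f' hf', fun a ↦ (mem_filter.1 (hf a)).2⟩

theorem card_le_card_biUnion_of_not_containsNontrivialCoset
    (hA : ¬ ContainsNontrivialCoset (A : Set G)) (hcard : #A = #B) (hB : 1 ∉ B) (S : Finset A) :
    #S ≤ #(S.biUnion fun a ↦ {b ∈ B | (a : G) * b ∉ A}) := by
  set N := S.biUnion fun a ↦ {b ∈ B | (a : G) * b ∉ A}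
  by_contra! hN
  have hNB : N ⊆ B := biUnion_subset.2 fun _ _ ↦ filter_subset _ _
  have hsub : S.map (Function.Embedding.subtype _) * insert 1 (B \ N) ⊆ A := by
    simp only [mul_subset_iff, mem_map, Function.Embedding.subtype_apply, mem_insert, mem_sdiff]
    rintro _ ⟨a, ha, rfl⟩ b (rfl | ⟨hb, hbN⟩)
    · simp
    · by_contra hab
      exact hbN (mem_biUnion.2 ⟨a, ha, mem_filter.2 ⟨hb, hab⟩⟩)
  refine hA (ContainsNontrivialCoset.of_mul_subset ?_ (insert_nonempty _ _) hsub ?_)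
  · exact map_nonempty.2 (nonempty_of_ne_empty (by rintro rfl; simp at hN))
  · rw [card_map, card_insert_of_notMem (fun h ↦ hB (mem_sdiff.1 h).1), card_sdiff_of_subset hNB]
    have := card_le_card hNB
    omega

end

/-- Let `G` be an arbitrary group and `A` a finite subset of `G` which does not contain
any left or right coset of any nontrivial proper finite subgroup of `G`. Then for any
finite subset `B` of `G` with `|A| = |B|` and `e ∉ B`, there is a matching from `A` to `B`. -/
theorem stmt0 {G : Type*} [Group G] (A : Finset G)
    (hA : ∀ H : Subgroup G, (H : Set G).Finite → H ≠ ⊥ → H ≠ ⊤ → ∀ x : G,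
      ¬ ((x * ·) '' (H : Set G) ⊆ (A : Set G)) ∧ ¬ ((· * x) '' (H : Set G) ⊆ (A : Set G)))
    (B : Finset G) (hcard : A.card = B.card) (hB : (1 : G) ∉ B) :
    ∃ f : ↥A ≃ ↥B, IsMatching A B f := by
  classical
  have hA' : ¬ ContainsNontrivialCoset (A : Set G) := by
    intro hC
    obtain ⟨K, hK, z, hz⟩ := hC.exists_smul_subset
    obtain rfl | hK_top := eq_or_ne K ⊤
    · have hBA : B = A := eq_of_subset_of_card_le
        (fun b _ ↦ hz ⟨z⁻¹ * b, trivial, by simp⟩) hcard.le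
      exact hB (hBA ▸ hz ⟨z⁻¹, trivial, by simp⟩)
    · have hK_fin : (K : Set G).Finite := Set.finite_smul_set.1 (A.finite_toSet.subset hz)
      exact (hA K hK_fin hK hK_top z).1 (by rwa [← Set.image_smul] at hz)
  exact exists_isMatching_of_forall_card_le hcard
    (card_le_card_biUnion_of_not_containsNontrivialCoset hA' hcard hB)
end

section
/- Let G be an abelian group and let A and B be finite subsets of G with |A| = |B|. If for every element b ∈ B the set A contains no coset of the cyclic subgroup generated by b, then there exists a matching from A to B. -/
/-!
Suppose Hall's condition fails for the bipartite graph joining `a ∈ A` to those `b ∈ B` with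
`a + b ∉ A`: some nonempty `T ⊆ A` has fewer than `|T|` neighbours. With `S` the set of
non-neighbours of `T` in `B`, this says `T + S ⊆ A` and `|T| + |S| > |A|`. Dyson e-transforms
`(T, S) ↦ (T ∪ (e + S), S ∩ (T - e))`, for `e ∈ T`, preserve these conditions and `|T| + |S|`
while shrinking `S`, so we may assume `T + S ⊆ T`. Then `T` is stable under translation by any
`b ∈ S`, hence contains a coset of `⟨b⟩`, and so does `A`.
-/

/-- A matching from a finite subset `A` to a finite subset `B` of an additive abelian
group `G` is a bijection `f : A → B` such that `a + f a ∉ A` for all `a ∈ A`. -/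
def IsAddMatching {G : Type*} [AddCommGroup G] (A B : Finset G) (f : ↥A ≃ ↥B) : Prop :=
  ∀ a : ↥A, (a : G) + (f a : G) ∉ A

open Finset

section

open Pointwise

variable {G : Type*} [AddCommGroup G] [DecidableEq G]

lemma Finset.image_add_zmultiples_subset_of_vadd_subset {T : Finset G} {b t : G}
    (hb : b +ᵥ T ⊆ T) (ht : t ∈ T) : (t + ·) '' (AddSubgroup.zmultiples b : Set G) ⊆ T := by
  have hfix : b +ᵥ T = T := eq_of_subset_of_card_le hb (card_vadd_finset b T).ge
  have hstab : AddSubgroup.zmultiples b ≤ AddAction.stabilizer G T :=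
    AddSubgroup.zmultiples_le.2 (AddAction.mem_stabilizer_iff.2 hfix)
  rintro _ ⟨g, hg, rfl⟩
  change t + g ∈ T
  rw [show t + g = g +ᵥ t from add_comm t g, ← AddAction.mem_stabilizer_iff.1 (hstab hg)]
  exact vadd_mem_vadd_finset ht

theorem Finset.exists_coset_subset_of_add_subset {A S T : Finset G} (hT : T.Nonempty)
    (hTA : T ⊆ A) (hTS : T + S ⊆ A) (hcard : #A < #T + #S) :
    ∃ b ∈ S, ∃ x : G, (x + ·) '' (AddSubgroup.zmultiples b : Set G) ⊆ A := by
  induction S using Finset.strongInduction generalizing T with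
  | H S ih =>
  by_cases hstable : T + S ⊆ T
  · obtain ⟨b, hb⟩ : S.Nonempty := card_pos.1 (by have := card_le_card hTA; omega)
    obtain ⟨t, ht⟩ := hT
    have hbT : b +ᵥ T ⊆ T := (vadd_finset_subset_add hb).trans (add_comm S T ▸ hstable)
    exact ⟨b, hb, t,
      (image_add_zmultiples_subset_of_vadd_subset hbT ht).trans (coe_subset.2 hTA)⟩
  · obtain ⟨e, he, s, hs, hes⟩ : ∃ e ∈ T, ∃ s ∈ S, e + s ∉ T := by
      simpa [add_subset_iff] using hstable
    set x := addDysonETransform e (T, S)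
    have hxS : x.2 ⊂ S :=
      ⟨inter_subset_left, fun h => hes (mem_neg_vadd_finset_iff.1 (mem_inter.1 (h hs)).2)⟩
    have hxA : x.1 ⊆ A := union_subset hTA ((vadd_finset_subset_add he).trans hTS)
    obtain ⟨b, hb, y, hy⟩ := ih x.2 hxS (hT.mono subset_union_left) hxA
      ((addDysonETransform.subset e (T, S)).trans hTS)
      (hcard.trans_eq (addDysonETransform.card e (T, S)).symm)
    exact ⟨b, hxS.subset hb, y, hy⟩

lemma card_le_card_biUnion_of_forall_not_coset_subset {A B : Finset G} (hcard : #A = #B)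
    (hA : ∀ b ∈ B, ∀ x : G, ¬ (x + ·) '' (AddSubgroup.zmultiples b : Set G) ⊆ A)
    (s : Finset A) : #s ≤ #(s.biUnion fun a => B.filter fun b => (a : G) + b ∉ A) := by
  set N := s.biUnion fun a => B.filter fun b => (a : G) + b ∉ A
  by_contra! hN
  have hNB : N ⊆ B := biUnion_subset.2 fun _ _ => filter_subset _ _
  have hTS : s.map (.subtype _) + (B \ N) ⊆ A := by
    refine add_subset_iff.2 fun x hx y hy => ?_
    obtain ⟨a, ha, rfl⟩ := mem_map.1 hx
    obtain ⟨hyB, hyN⟩ := mem_sdiff.1 hy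
    by_contra hay
    exact hyN (mem_biUnion.2 ⟨a, ha, mem_filter.2 ⟨hyB, hay⟩⟩)
  have hs : s.Nonempty := card_pos.1 (by omega)
  obtain ⟨b, hb, x, hx⟩ := exists_coset_subset_of_add_subset hs.map
    (coe_subset.1 (map_subtype_subset s)) hTS
    (by rw [card_map, card_sdiff_of_subset hNB]; have := card_le_card hNB; omega)
  exact hA b (mem_sdiff.1 hb).1 x hx

end

/-- Let `G` be an abelian group and `A`, `B` finite subsets of `G` with the same
cardinality. If for every `b ∈ B` the set `A` contains no coset of the cyclic subgroup
generated by `b`, then there is a matching from `A` to `B`. -/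
theorem stmt1 {G : Type*} [AddCommGroup G] (A B : Finset G) (hcard : A.card = B.card)
    (hA : ∀ b ∈ B, ∀ x : G,
      ¬ ((x + ·) '' (AddSubgroup.zmultiples b : Set G) ⊆ (A : Set G))) :
    ∃ f : ↥A ≃ ↥B, IsAddMatching A B f := by
  classical
  obtain ⟨f, hf_inj, hf⟩ := (all_card_le_biUnion_card_iff_exists_injective _).1
    (card_le_card_biUnion_of_forall_not_coset_subset hcard hA)
  let g : A → B := fun a => ⟨f a, (mem_filter.1 (hf a)).1⟩
  have hg : Function.Bijective g := (Fintype.bijective_iff_injective_and_card g).2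
    ⟨fun a a' h => hf_inj (congrArg Subtype.val h), by simpa using hcard⟩
  exact ⟨.ofBijective g hg, fun a => (mem_filter.1 (hf a)).2⟩
end

section
/- Let G be an abelian group and let A be a finite subset of G such that |A| is odd and 0 ∉ A. Then every acyclic matching f from A to itself has a fixed point, i.e. there exists a ∈ A with f(a) = a. -/
/-- The multiplicity function of `f : A → B`, sending `x : G` to `|{a ∈ A : a + f a = x}|`. -/
noncomputable def multFn {G : Type*} [AddCommGroup G] (A B : Finset G) (f : ↥A ≃ ↥B) (x : G) : ℕ :=
  Nat.card {a : ↥A // (a : G) + (f a : G) = x}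

/-- Let `G` be an abelian group and `A` a finite subset of `G` with `|A|` odd and `0 ∉ A`.
Then every acyclic matching `f` from `A` to itself has a fixed point. -/
theorem stmt3 {G : Type*} [AddCommGroup G] (A : Finset G) (hodd : Odd A.card)
    (h0 : (0 : G) ∉ A) (f : ↥A ≃ ↥A) (hf : IsAddMatching A A f)
    (hacyclic : ∀ g : ↥A ≃ ↥A, IsAddMatching A A g → multFn A A f = multFn A A g → f = g) :
    ∃ a : ↥A, f a = a := by
  classical
  -- f.symm is also a matching with the same multiplicity function
  have hsymm : IsAddMatching A A f.symm := by
    intro a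
    have := hf (f.symm a)
    simpa [add_comm] using this
  have hmult : multFn A A f = multFn A A f.symm := by
    funext x
    unfold multFn
    exact Nat.card_congr (f.subtypeEquiv (fun a => by
      constructor
      · intro h; simpa [add_comm] using h
      · intro h; simpa [add_comm] using h))
  have hff : f = f.symm := hacyclic f.symm hsymm hmult
  -- so f is an involution; odd cardinality gives a fixed point
  have hsq : (f : Equiv.Perm ↥A) ^ (2 : ℕ) ^ (1 : ℕ) = 1 := by
    ext a
    simp [pow_succ, Equiv.Perm.mul_apply]
    nth_rewrite 1 [hff]
    simp
  have hcard : ¬ (2 ∣ Fintype.card ↥A) := by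
    rw [Fintype.card_coe]
    exact (Nat.not_even_iff_odd.mpr hodd) ∘ even_iff_two_dvd.mpr
  haveI : Fact (Nat.Prime 2) := ⟨Nat.prime_two⟩
  exact Equiv.Perm.exists_fixed_point_of_prime hcard hsq
end

section
/- Let p be a prime number with p ≡ -1 (mod 8). Then ℤ/pℤ does not satisfy the acyclic matching property. More precisely, for the set A of nonzero quadratic residues modulo p, there is no acyclic matching from A to A. -/
/-- A matching `f : A → B` is acyclic if every matching `g : A → B` with the same
multiplicity function equals `f`. -/
def IsAcyclicAddMatching {G : Type*} [AddCommGroup G] (A B : Finset G) (f : ↥A ≃ ↥B) :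
    Prop :=
  IsAddMatching A B f ∧
    ∀ g : ↥A ≃ ↥B, IsAddMatching A B g → multFn A B f = multFn A B g → f = g

/-- A group `G` has the acyclic matching property if for all finite subsets `A`, `B` of
`G` with `|A| = |B|` and `0 ∉ B` there is an acyclic matching from `A` to `B`. -/
def HasAcyclicMatchingProperty (G : Type*) [AddCommGroup G] : Prop :=
  ∀ A B : Finset G, A.card = B.card → (0 : G) ∉ B →
    ∃ f : ↥A ≃ ↥B, IsAcyclicAddMatching A B f

/-- The set of nonzero quadratic residues modulo `p`. -/
def quadRes (p : ℕ) : Finset (ZMod p) :=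
  ((Finset.range p).image fun n : ℕ => ((n : ZMod p)) ^ 2).erase 0

/-!
Swapping the roles of `a` and `f a` turns a matching `f : A → A` into the matching `f⁻¹` with the
same multiplicity function, so an acyclic one is an involution. If `a + a ∈ A` for all `a ∈ A`,
it has no fixed point, hence `|A|` is even. For `p ≡ 7 (mod 8)` the set `A` of nonzero squares
contains `2` and is closed under multiplication, so `a + a = 2a ∈ A`; but `|A|` is odd, because
inversion is an involution of `A` whose only fixed point is `1` (`-1` is not a square as
`p ≡ 3 (mod 4)`).
-/

open Equiv

section Matching

variable {G : Type*} [AddCommGroup G] {A : Finset G} {f : A ≃ A}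

lemma IsAddMatching.symm (hf : IsAddMatching A A f) : IsAddMatching A A f.symm := fun a => by
  simpa [add_comm] using hf (f.symm a)

lemma multFn_symm (f : A ≃ A) : multFn A A f.symm = multFn A A f :=
  funext fun _ => Nat.card_congr <| f.symm.subtypeEquiv fun a => by
    rw [f.apply_symm_apply, add_comm]

lemma IsAcyclicAddMatching.symm_eq (hf : IsAcyclicAddMatching A A f) : f.symm = f :=
  (hf.2 _ hf.1.symm (multFn_symm f).symm).symm

lemma IsAddMatching.apply_ne (hA : ∀ a ∈ A, a + a ∈ A) (hf : IsAddMatching A A f) (a : A) :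
    f a ≠ a :=
  fun h => hf a (by rw [h]; exact hA a a.2)

lemma IsAcyclicAddMatching.two_dvd_card (hA : ∀ a ∈ A, a + a ∈ A)
    (hf : IsAcyclicAddMatching A A f) : 2 ∣ A.card := by
  by_contra hodd
  have hsq : f ^ (2 ^ 1) = 1 := by
    have hinv : f⁻¹ = f := hf.symm_eq
    rw [pow_one, sq]
    nth_rewrite 1 [← hinv]
    exact inv_mul_cancel f
  obtain ⟨a, ha⟩ := Perm.exists_fixed_point_of_prime (by rwa [Fintype.card_coe]) hsq
  exact hf.1.apply_ne hA a ha

end Matching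

section QuadRes

variable {p : ℕ}

lemma mem_quadRes [NeZero p] {x : ZMod p} : x ∈ quadRes p ↔ x ≠ 0 ∧ IsSquare x := by
  simp only [quadRes, Finset.mem_erase, Finset.mem_image, Finset.mem_range, IsSquare]
  refine and_congr_right fun _ => ⟨?_, ?_⟩
  · rintro ⟨n, -, rfl⟩
    exact ⟨n, sq _⟩
  · rintro ⟨y, rfl⟩
    exact ⟨y.val, y.val_lt, by rw [ZMod.natCast_zmod_val, sq]⟩

variable [Fact p.Prime]

lemma mul_mem_quadRes {x y : ZMod p} (hx : x ∈ quadRes p) (hy : y ∈ quadRes p) :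
    x * y ∈ quadRes p := by
  rw [mem_quadRes] at *
  exact ⟨mul_ne_zero hx.1 hy.1, hx.2.mul hy.2⟩

lemma inv_mem_quadRes_iff {x : ZMod p} : x⁻¹ ∈ quadRes p ↔ x ∈ quadRes p := by
  simp [mem_quadRes]

lemma add_self_mem_quadRes (hp8 : p % 8 = 1 ∨ p % 8 = 7) {x : ZMod p} (hx : x ∈ quadRes p) :
    x + x ∈ quadRes p := by
  have hp2 : p ≠ 2 := by omega
  have h2 : (2 : ZMod p) ∈ quadRes p :=
    mem_quadRes.2 ⟨Ring.two_ne_zero (by rwa [ZMod.ringChar_zmod_n]),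
      (ZMod.exists_sq_eq_two_iff hp2).2 hp8⟩
  rw [← two_mul]
  exact mul_mem_quadRes h2 hx

lemma not_two_dvd_card_quadRes (hp4 : p % 4 = 3) : ¬ 2 ∣ (quadRes p).card := by
  intro heven
  let inv : Perm (quadRes p) := (Equiv.inv _).subtypeEquiv fun _ => inv_mem_quadRes_iff.symm
  have hinv : inv ^ (2 ^ 1) = 1 := Perm.ext fun x => Subtype.ext (inv_inv (x : ZMod p))
  have h1 : (1 : ZMod p) ∈ quadRes p := mem_quadRes.2 ⟨one_ne_zero, IsSquare.one⟩
  obtain ⟨b, hb, hb1⟩ := Perm.exists_fixed_point_of_prime' (by rwa [Fintype.card_coe]) hinv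
    (a := ⟨1, h1⟩) (Subtype.ext inv_one)
  have hb0 : (b : ZMod p) ≠ 0 := (mem_quadRes.1 b.2).1
  have hbb : (b : ZMod p) * b = 1 := by
    have : (b : ZMod p)⁻¹ = b := congrArg Subtype.val hb
    calc (b : ZMod p) * b = (b : ZMod p)⁻¹ * b := by rw [this]
      _ = 1 := inv_mul_cancel₀ hb0
  rcases mul_self_eq_one_iff.1 hbb with h | h
  · exact hb1 (Subtype.ext h)
  · exact (ZMod.exists_sq_eq_neg_one_iff.1 (h ▸ (mem_quadRes.1 b.2).2)) hp4

end QuadRes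

/-- Let `p` be a prime with `p ≡ -1 (mod 8)`. Then `ℤ/pℤ` does not satisfy the acyclic
matching property; more precisely, there is no acyclic matching from the set `A` of
nonzero quadratic residues modulo `p` to itself. -/
theorem stmt5 (p : ℕ) (hp : p.Prime) (hmod : p % 8 = 7) :
    ¬ HasAcyclicMatchingProperty (ZMod p) ∧
      ¬ ∃ f : ↥(quadRes p) ≃ ↥(quadRes p), IsAcyclicAddMatching (quadRes p) (quadRes p) f := by
  have : Fact p.Prime := ⟨hp⟩
  have key : ¬ ∃ f : ↥(quadRes p) ≃ ↥(quadRes p),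
      IsAcyclicAddMatching (quadRes p) (quadRes p) f := fun ⟨_, hf⟩ =>
    not_two_dvd_card_quadRes (by omega)
      (hf.two_dvd_card fun _ => add_self_mem_quadRes (Or.inr hmod))
  exact ⟨fun H => key (H _ _ rfl (Finset.notMem_erase 0 _)), key⟩
end

section
/- Let p be a prime number such that the multiplicative order of 2 modulo p is an odd number m. Then ℤ/pℤ does not satisfy the acyclic matching property. More precisely, for the set A = {2^i mod p : 0 ≤ i ≤ m−1} of powers of 2 modulo p, there is no acyclic matching from A to A. -/
/-- The set `{2^i mod p : 0 ≤ i ≤ m - 1}` of powers of `2` modulo `p`, where `m` is the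
multiplicative order of `2` modulo `p`. -/
noncomputable def powersOfTwo (p : ℕ) : Finset (ZMod p) :=
  (Finset.range (orderOf (2 : ZMod p))).image fun i : ℕ => (2 : ZMod p) ^ i

/-- Let `p` be a prime such that the multiplicative order of `2` modulo `p` is odd. Then
`ℤ/pℤ` does not satisfy the acyclic matching property; more precisely, there is no acyclic
matching from the set `A = {2^i mod p : 0 ≤ i ≤ m-1}` of powers of `2` modulo `p` to
itself. -/
theorem stmt6 (p : ℕ) (hp : p.Prime) (hodd : Odd (orderOf (2 : ZMod p))) :
    ¬ HasAcyclicMatchingProperty (ZMod p) ∧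
      ¬ ∃ f : ↥(powersOfTwo p) ≃ ↥(powersOfTwo p),
          IsAcyclicAddMatching (powersOfTwo p) (powersOfTwo p) f := by
  haveI : Fact p.Prime := ⟨hp⟩
  set m := orderOf (2 : ZMod p) with hmdef
  have hm0 : m ≠ 0 := by
    rintro h
    rw [h] at hodd
    simp [Nat.odd_iff] at hodd
  have hmem : ∀ n : ℕ, (2 : ZMod p) ^ n ∈ powersOfTwo p := by
    intro n
    exact Finset.mem_image.mpr ⟨n % m, Finset.mem_range.mpr (Nat.mod_lt _ (Nat.pos_of_ne_zero hm0)),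
      pow_mod_orderOf 2 n⟩
  have h0 : (0 : ZMod p) ∉ powersOfTwo p := by
    intro h
    obtain ⟨i, hi, hzero⟩ := Finset.mem_image.mp h
    have h1 : (2 : ZMod p) ^ m = 1 := pow_orderOf_eq_one 2
    have : (1 : ZMod p) = 0 := by
      calc (1 : ZMod p) = 2 ^ m := h1.symm
        _ = 2 ^ i * 2 ^ (m - i) := by
            rw [← pow_add, Nat.add_sub_cancel' (le_of_lt (Finset.mem_range.mp hi))]
        _ = 0 := by rw [hzero, zero_mul]
    exact one_ne_zero this
  have key : ¬ ∃ f : ↥(powersOfTwo p) ≃ ↥(powersOfTwo p),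
      IsAcyclicAddMatching (powersOfTwo p) (powersOfTwo p) f := by
    rintro ⟨f, hmatch, huniq⟩
    have hsymm : IsAddMatching (powersOfTwo p) (powersOfTwo p) f.symm := by
      intro b
      have := hmatch (f.symm b)
      simpa [add_comm] using this
    have hmult : multFn (powersOfTwo p) (powersOfTwo p) f
        = multFn (powersOfTwo p) (powersOfTwo p) f.symm := by
      funext x
      exact Nat.card_congr (Equiv.subtypeEquiv f (fun a => by simp [add_comm]))
    have hff := huniq f.symm hsymm hmult
    have hinv : ∀ a, f (f a) = a := by
      intro a
      have h1 : f (f a) = f.symm (f a) := Equiv.ext_iff.mp hff (f a)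
      simp [h1]
    haveI : Fact (Nat.Prime 2) := ⟨Nat.prime_two⟩
    have hcard : Fintype.card ↥(powersOfTwo p) = m := by
      rw [Fintype.card_coe]
      unfold powersOfTwo
      rw [Finset.card_image_of_injOn, Finset.card_range]
      intro i hi j hj hij
      exact pow_injOn_Iio_orderOf (by simpa using Finset.mem_range.mp (Finset.mem_coe.mp hi))
        (by simpa using Finset.mem_range.mp (Finset.mem_coe.mp hj)) hij
    have hndvd : ¬ (2 ∣ Fintype.card ↥(powersOfTwo p)) := by
      rw [hcard, Nat.odd_iff] at *
      omega
    have hσ : f ^ (2 : ℕ) ^ (1 : ℕ) = 1 := by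
      have hff1 : f * f = 1 := Equiv.ext fun a => by
        simpa [Equiv.Perm.mul_apply] using hinv a
      have h21 : ((2 : ℕ) ^ (1 : ℕ)) = 2 := by norm_num
      rw [h21, sq]
      exact hff1
    obtain ⟨a, ha⟩ := Equiv.Perm.exists_fixed_point_of_prime hndvd hσ
    have hnot := hmatch a
    rw [ha] at hnot
    obtain ⟨i, hi, hai⟩ := Finset.mem_image.mp a.2
    apply hnot
    have heq : ((a : ZMod p) + a) = 2 ^ (i + 1) := by rw [← hai]; ring
    rw [heq]
    exact hmem (i + 1)
  exact ⟨fun h => key (h _ _ rfl h0), key⟩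
end

section
/- Let G be a group containing a nontrivial proper finite subgroup H. Let A = xH be any right coset of H (x ∈ G) and let B = (H ∖ {e}) ∪ {g} for any element g ∈ G ∖ H. Then A and B are finite subsets of G with |A| = |B| and e ∉ B, but there is no matching from A to B. In particular, G does not have the matching property. -/
/-- A group `G` has the matching property if for all finite subsets `A`, `B` of `G` with
`|A| = |B|` and `1 ∉ B` there is a matching from `A` to `B`. -/
def HasMatchingProperty (G : Type*) [Group G] : Prop :=
  ∀ A B : Finset G, A.card = B.card → (1 : G) ∉ B → ∃ f : ↥A ≃ ↥B, IsMatching A B f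

/-!
Right multiplication by `h ∈ H` maps the coset `x * H` into itself. So if `1 ≠ h ∈ H`, whatever
`a ∈ x * H` a bijection sends to `h` satisfies `a * h ∈ x * H`, and no matching exists.
-/

section Matching

variable {G : Type*} [Group G]

theorem not_exists_isMatching_of_mul_mem {A B : Finset G} {b : G} (hb : b ∈ B)
    (hAb : ∀ a ∈ A, a * b ∈ A) : ¬ ∃ f : ↥A ≃ ↥B, IsMatching A B f := by
  rintro ⟨f, hf⟩
  have hfb := hf (f.symm ⟨b, hb⟩)
  rw [f.apply_symm_apply] at hfb
  exact hfb (hAb _ (f.symm ⟨b, hb⟩).2)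

theorem not_hasMatchingProperty_of_not_exists_isMatching {A B : Finset G}
    (hcard : A.card = B.card) (hB : (1 : G) ∉ B) (hAB : ¬ ∃ f : ↥A ≃ ↥B, IsMatching A B f) :
    ¬ HasMatchingProperty G :=
  fun hG ↦ hAB (hG A B hcard hB)

end Matching

namespace Subgroup

variable {G : Type*} [Group G] [DecidableEq G] (H : Subgroup G) (hfin : (H : Set G).Finite)

theorem mul_mem_image_leftCoset {x a h : G} (ha : a ∈ hfin.toFinset.image (x * ·))
    (hh : h ∈ H) : a * h ∈ hfin.toFinset.image (x * ·) := by
  obtain ⟨y, hy, rfl⟩ := Finset.mem_image.mp ha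
  rw [Set.Finite.mem_toFinset] at hy
  exact Finset.mem_image.mpr ⟨y * h, by simpa using H.mul_mem hy hh, (mul_assoc x y h).symm⟩

theorem card_image_leftCoset (x : G) :
    (hfin.toFinset.image (x * ·)).card = hfin.toFinset.card :=
  Finset.card_image_of_injective _ (mul_right_injective x)

variable {H}

theorem card_insert_erase_one {g : G} (hg : g ∉ H) :
    (insert g (hfin.toFinset.erase 1)).card = hfin.toFinset.card := by
  have h1 : (1 : G) ∈ hfin.toFinset := by simp
  rw [Finset.card_insert_of_notMem (by simp [hg]), Finset.card_erase_add_one h1]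

theorem one_notMem_insert_erase_one {g : G} (hg : g ∉ H) :
    (1 : G) ∉ insert g (hfin.toFinset.erase 1) := by
  simp only [Finset.mem_insert, Finset.mem_erase, ne_eq, not_true_eq_false, false_and, or_false]
  rintro rfl
  exact hg H.one_mem

end Subgroup

theorem stmt7_general {G : Type*} [Group G] [DecidableEq G] (H : Subgroup G)
    (hfin : (H : Set G).Finite) (hbot : H ≠ ⊥) (x g : G) (hg : g ∉ H)
    (A B : Finset G) (hA : A = hfin.toFinset.image (x * ·))
    (hB : B = insert g (hfin.toFinset.erase 1)) :
    A.card = B.card ∧ (1 : G) ∉ B ∧ (¬ ∃ f : ↥A ≃ ↥B, IsMatching A B f) ∧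
      ¬ HasMatchingProperty G := by
  subst hA hB
  have hcard := (H.card_image_leftCoset hfin x).trans (Subgroup.card_insert_erase_one hfin hg).symm
  have hone := Subgroup.one_notMem_insert_erase_one hfin hg
  obtain ⟨h, hhH, hh1⟩ := H.bot_or_exists_ne_one.resolve_left hbot
  have hnoMatching : ¬ ∃ f : ↥(hfin.toFinset.image (x * ·)) ≃ ↥(insert g (hfin.toFinset.erase 1)),
      IsMatching _ _ f :=
    not_exists_isMatching_of_mul_mem
      (Finset.mem_insert_of_mem (Finset.mem_erase.mpr ⟨hh1, hfin.mem_toFinset.mpr hhH⟩))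
      fun a ha ↦ H.mul_mem_image_leftCoset hfin ha hhH
  exact ⟨hcard, hone, hnoMatching,
    not_hasMatchingProperty_of_not_exists_isMatching hcard hone hnoMatching⟩

/-- Let `G` be a group containing a nontrivial proper finite subgroup `H`, let
`A = x * H` be a coset of `H` and `B = (H \ {1}) ∪ {g}` for some `g ∈ G \ H`. Then `A`
and `B` are finite subsets of `G` with `|A| = |B|` and `1 ∉ B`, but there is no matching
from `A` to `B`; in particular `G` does not have the matching property. -/
theorem stmt7 {G : Type*} [Group G] [DecidableEq G] (H : Subgroup G)
    (hfin : (H : Set G).Finite) (hbot : H ≠ ⊥) (htop : H ≠ ⊤) (x g : G) (hg : g ∉ H)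
    (A B : Finset G) (hA : A = hfin.toFinset.image (x * ·))
    (hB : B = insert g (hfin.toFinset.erase 1)) :
    A.card = B.card ∧ (1 : G) ∉ B ∧ (¬ ∃ f : ↥A ≃ ↥B, IsMatching A B f) ∧
      ¬ HasMatchingProperty G :=
  stmt7_general H hfin hbot x g hg A B hA hB
end

section
/- Every torsion-free group has the matching property: if G is a group in which every nonidentity element has infinite order, then for every pair of finite subsets A and B of G with |A| = |B| and e ∉ B, there exists a matching from A to B. -/
/-!
By Hall's marriage theorem it suffices that every `S ⊆ A` has at least `|S|` admissible
partners `N ⊆ B`, where `b` is admissible for `a` when `a * b ∉ A`. If `|N| < |S|`, then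
`S * ({1} ∪ (B \ N)) ⊆ A`, and the Cauchy–Davenport inequality of Kemperman for torsion-free
groups gives `|A| ≥ |S| + |B \ N| = |S| + |B| - |N| > |B|`, a contradiction.
-/

open Finset
open scoped Pointwise

section TorsionFree

variable {G : Type*} [Group G]

lemma cauchy_davenport_of_forall_not_isOfFinOrder [DecidableEq G]
    (hG : ∀ g : G, g ≠ 1 → ¬IsOfFinOrder g) {s t : Finset G} (hs : s.Nonempty)
    (ht : t.Nonempty) : #s + #t - 1 ≤ #(s * t) := by
  have hmin : Monoid.minOrder G = ⊤ :=
    top_le_iff.mp <| Monoid.le_minOrder.2 fun g hg hfin => absurd hfin (hG g hg)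
  have := cauchy_davenport_minOrder_mul hs ht
  rw [hmin, min_eq_right le_top] at this
  exact_mod_cast this

section Hall

variable [DecidableEq G] {A B S : Finset G}

lemma mul_insert_one_sdiff_biUnion_subset (hS : S ⊆ A) :
    S * insert 1 (B \ S.biUnion fun a => {b ∈ B | a * b ∉ A}) ⊆ A := by
  rintro _ hx
  obtain ⟨a, ha, b, hb, rfl⟩ := mem_mul.mp hx
  obtain rfl | hb := mem_insert.mp hb
  · simpa using hS ha
  · obtain ⟨hbB, hbN⟩ := mem_sdiff.mp hb
    by_contra hab
    exact hbN (mem_biUnion.mpr ⟨a, ha, mem_filter.mpr ⟨hbB, hab⟩⟩)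

lemma card_le_card_biUnion_of_forall_not_isOfFinOrder (hG : ∀ g : G, g ≠ 1 → ¬IsOfFinOrder g)
    (hAB : #A ≤ #B) (hB : (1 : G) ∉ B) (hS : S ⊆ A) :
    #S ≤ #(S.biUnion fun a => {b ∈ B | a * b ∉ A}) := by
  set N := S.biUnion fun a => {b ∈ B | a * b ∉ A}
  obtain rfl | hSne := S.eq_empty_or_nonempty
  · simp
  have hNB : N ⊆ B := biUnion_subset.mpr fun _ _ => filter_subset _ _
  have hcard_insert : #(insert 1 (B \ N)) = #B - #N + 1 := by
    rw [card_insert_of_notMem fun h => hB (mem_sdiff.mp h).1, card_sdiff_of_subset hNB]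
  have hCD := cauchy_davenport_of_forall_not_isOfFinOrder hG hSne (insert_nonempty 1 (B \ N))
  have hA : #(S * insert 1 (B \ N)) ≤ #A := card_le_card (mul_insert_one_sdiff_biUnion_subset hS)
  have hNle := card_le_card hNB
  omega

end Hall

theorem exists_isMatching_of_forall_not_isOfFinOrder (hG : ∀ g : G, g ≠ 1 → ¬IsOfFinOrder g)
    {A B : Finset G} (hcard : #A = #B) (hB : (1 : G) ∉ B) :
    ∃ f : A ≃ B, IsMatching A B f := by
  classical
  let t : A → Finset G := fun a => {b ∈ B | (a : G) * b ∉ A}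
  have hall (s : Finset A) : #s ≤ #(s.biUnion t) := by
    simpa only [SetLike.coe_sort_coe, map_eq_image, Function.Embedding.coe_subtype, image_biUnion,
      card_image_of_injective _ Subtype.val_injective] using
      card_le_card_biUnion_of_forall_not_isOfFinOrder hG hcard.le hB
        (map_subtype_subset s : s.map (Function.Embedding.subtype _) ⊆ A)
  obtain ⟨f, hf_inj, hf_mem⟩ := (all_card_le_biUnion_card_iff_exists_injective t).mp hall
  let g : A → B := fun a => ⟨f a, (mem_filter.mp (hf_mem a)).1⟩
  have hg : Function.Bijective g :=
    (Fintype.bijective_iff_injective_and_card g).mpr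
      ⟨fun a a' h => hf_inj (congrArg Subtype.val h), by simpa using hcard⟩
  exact ⟨Equiv.ofBijective g hg, fun a => (mem_filter.mp (hf_mem a)).2⟩

end TorsionFree

/-- Every torsion-free group has the matching property: if every nonidentity element of
`G` has infinite order, then for all finite subsets `A`, `B` of `G` with `|A| = |B|` and
`1 ∉ B` there is a matching from `A` to `B`. -/
theorem stmt8 {G : Type*} [Group G] (htf : ∀ g : G, g ≠ 1 → ¬ IsOfFinOrder g)
    (A B : Finset G) (hcard : A.card = B.card) (hB : (1 : G) ∉ B) :
    ∃ f : ↥A ≃ ↥B, IsMatching A B f :=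
  exists_isMatching_of_forall_not_isOfFinOrder htf hcard hB
end

section
/- Every finite group of prime order has the matching property: if G is a finite group of prime order p, then for every pair of subsets A and B of G with |A| = |B| and e ∉ B, there exists a matching from A to B. -/
open scoped Pointwise

/-- Every finite group of prime order has the matching property: if `G` is a finite group
of prime order `p`, then for all subsets `A`, `B` of `G` with `|A| = |B|` and `1 ∉ B`
there is a matching from `A` to `B`. -/
theorem stmt9 {G : Type*} [Group G] [Fintype G] (p : ℕ) (hp : p.Prime)
    (hG : Fintype.card G = p) (A B : Finset G) (hcard : A.card = B.card)
    (hB : (1 : G) ∉ B) :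
    ∃ f : ↥A ≃ ↥B, IsMatching A B f := by
  classical
  -- A is a proper subset: A.card < p
  have hA_lt : A.card < p := by
    rcases lt_or_eq_of_le (hG ▸ A.card_le_univ) with h | h
    · simpa [hG] using h
    · exfalso
      have hBcard : B.card = Fintype.card G := by omega
      have : B = Finset.univ := Finset.eq_univ_of_card B hBcard
      exact hB (this ▸ Finset.mem_univ 1)
  -- minimal order of a nontrivial element is p
  have hmin : (p : ℕ∞) ≤ Monoid.minOrder G := by
    rw [Monoid.le_minOrder]
    intro a ha _
    have hdvd : orderOf a ∣ p := hG ▸ orderOf_dvd_card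
    rcases (Nat.Prime.eq_one_or_self_of_dvd hp _ hdvd) with h | h
    · exact absurd (orderOf_eq_one_iff.mp h) ha
    · exact le_of_eq (by exact_mod_cast h.symm)
  -- Cauchy-Davenport in G
  have hCD : ∀ s t : Finset G, s.Nonempty → t.Nonempty →
      min p (s.card + t.card - 1) ≤ (s * t).card := by
    intro s t hs ht
    have := cauchy_davenport_minOrder_mul hs ht
    have h2 : min (p : ℕ∞) ((s.card + t.card - 1 : ℕ) : ℕ∞) ≤ ((s * t).card : ℕ∞) :=
      le_trans (min_le_min_right _ hmin) this
    rcases min_le_iff.mp h2 with h | h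
    · exact le_trans (min_le_of_left_le (by exact_mod_cast h)) le_rfl
    · exact min_le_of_right_le (by exact_mod_cast h)
  -- Hall's condition
  set t : ↥A → Finset ↥B := fun a => Finset.univ.filter fun b => (a : G) * (b : G) ∉ A with ht
  have hall : ∀ S : Finset ↥A, S.card ≤ (S.biUnion t).card := by
    intro S
    rcases S.eq_empty_or_nonempty with rfl | hS
    · simp
    set S' : Finset G := S.image Subtype.val with hS'
    have hS'ne : S'.Nonempty := by rw [hS']; exact hS.image _
    have hS'card : S'.card = S.card := Finset.card_image_of_injective _ Subtype.val_injective
    have hS'A : S' ⊆ A := by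
      intro x hx
      obtain ⟨a, _, rfl⟩ := Finset.mem_image.mp hx
      exact a.2
    set T' : Finset G := B.filter (fun b => ∀ a ∈ S', a * b ∈ A) with hT'
    -- key inequality via Cauchy-Davenport
    have hkey : S'.card + T'.card ≤ A.card := by
      have h1T : (1 : G) ∉ T' := fun h => hB (Finset.mem_of_mem_filter _ h)
      set U : Finset G := insert 1 T' with hU
      have hUcard : U.card = T'.card + 1 := Finset.card_insert_of_notMem h1T
      have hsub : S' * U ⊆ A := by
        intro x hx
        obtain ⟨a, ha, u, hu, rfl⟩ := Finset.mem_mul.mp hx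
        rcases Finset.mem_insert.mp hu with rfl | hu
        · simpa using hS'A ha
        · exact (Finset.mem_filter.mp hu).2 a ha
      have := hCD S' U hS'ne ⟨1, Finset.mem_insert_self 1 T'⟩
      have hle : (S' * U).card ≤ A.card := Finset.card_le_card hsub
      rw [hUcard] at this
      rcases min_le_iff.mp this with h | h
      · omega
      · omega
    -- the bipartite neighborhood of S corresponds to B \ T'
    have himg : (S.biUnion t).image Subtype.val = B \ T' := by
      ext x
      constructor
      · intro hx
        obtain ⟨b, hb, rfl⟩ := Finset.mem_image.mp hx
        obtain ⟨a, haS, hab⟩ := Finset.mem_biUnion.mp hb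
        simp only [ht, Finset.mem_filter, Finset.mem_univ, true_and] at hab
        refine Finset.mem_sdiff.mpr ⟨b.2, fun hmem => ?_⟩
        exact hab ((Finset.mem_filter.mp hmem).2 a (Finset.mem_image_of_mem _ haS))
      · intro hx
        obtain ⟨hxB, hxT⟩ := Finset.mem_sdiff.mp hx
        have hnot : ¬ ∀ a ∈ S', a * x ∈ A := fun h => hxT (Finset.mem_filter.mpr ⟨hxB, h⟩)
        push_neg at hnot
        obtain ⟨a, haS', hax⟩ := hnot
        obtain ⟨a', ha'S, rfl⟩ := Finset.mem_image.mp haS'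
        refine Finset.mem_image.mpr ⟨⟨x, hxB⟩, Finset.mem_biUnion.mpr ⟨a', ha'S, ?_⟩, rfl⟩
        simp only [ht, Finset.mem_filter, Finset.mem_univ, true_and]
        exact hax
    have hcardimg : (S.biUnion t).card = B.card - T'.card := by
      rw [← Finset.card_image_of_injective (S.biUnion t) Subtype.val_injective, himg,
        Finset.card_sdiff_of_subset (Finset.filter_subset _ _)]
    rw [hcardimg]
    omega
  obtain ⟨f, hfinj, hf⟩ := (Finset.all_card_le_biUnion_card_iff_existsInjective' t).mp hall
  have hbij : Function.Bijective f := by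
    rw [Fintype.bijective_iff_injective_and_card]
    exact ⟨hfinj, by simp [hcard]⟩
  refine ⟨Equiv.ofBijective f hbij, fun a => ?_⟩
  have := hf a
  simp only [ht, Finset.mem_filter, Finset.mem_univ, true_and] at this
  exact this
end

section
/- Let G = ∏_i G_i be a product of groups and let p_i : G → G_i be the projection onto the i-th factor. Let A = {a_1, …, a_n} and B = {b_1, …, b_n} be two n-element subsets of G, and let A_i = (p_i(a_1), …, p_i(a_n)) and B_i = (p_i(b_1), …, p_i(b_n)) be the n-tuples of their i-th components. If there is a matching from the tuple A_i to the tuple B_i in G_i, then there is a matching from the set A to the set B in G. -/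
/-- A permutation `σ` is a matching from an `n`-tuple `a` to an `n`-tuple `b` of elements
of a group `H` if `a k * b (σ k) ≠ a l` for all `k, l`. -/
def IsTupleMatching {H : Type*} [Group H] {n : ℕ} (a b : Fin n → H)
    (σ : Equiv.Perm (Fin n)) : Prop :=
  ∀ k l : Fin n, a k * b (σ k) ≠ a l

/-- Let `G = ∏ i, G i` be a product of groups, and let `A = {a 1, …, a n}` and
`B = {b 1, …, b n}` be `n`-element subsets of `G` (so `a`, `b` are injective tuples). If
for some index `i` there is a matching from the tuple of `i`-th components of `A` to the
tuple of `i`-th components of `B` in `G i`, then there is a matching from `A` to `B` in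
`G`, i.e. a permutation `σ` with `a k * b (σ k) ∉ A` for all `k`. -/
theorem stmt10 {ι : Type*} (G : ι → Type*) [∀ i, Group (G i)] {n : ℕ}
    (a b : Fin n → (∀ i, G i)) (ha : Function.Injective a) (hb : Function.Injective b)
    (i : ι)
    (h : ∃ σ : Equiv.Perm (Fin n),
      IsTupleMatching (fun k => a k i) (fun k => b k i) σ) :
    ∃ σ : Equiv.Perm (Fin n), IsTupleMatching a b σ := by
  obtain ⟨σ, hσ⟩ := h
  exact ⟨σ, fun k l he => hσ k l (congrFun he i)⟩
end

section
/- Let K ⊆ L be a purely transcendental field extension and let A and B be nonzero finite-dimensional K-subspaces of L of the same dimension with AB ∩ A = {0} and B = αA for some nonzero α ∈ L. Then the multiplication-by-α map w_α : A → B, w_α(a) = αa, is an acyclic matching from A to B: w_α is a strong matching, and every strong matching h : A → B equivalent to w_α satisfies h = c·w_α for some constant c ∈ K. -/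
/-!
Since `a · (a⁻¹A ∩ B) ⊆ A ∩ AB = 0`, every linear isomorphism `A → B` is a strong matching.

If `h` is equivalent to `w_α` via `φ`, then `G := w_α⁻¹ ∘ h` is an endomorphism of `A` with
`a · G a = (φ a)²`. Polarizing gives `(a · G b - b · G a)² = 0`, so `G` is multiplication by some
`c ∈ L` with `cA ⊆ A`. As `A` is finite-dimensional, `c` is algebraic over `K`; but `L` is the
fraction field of a polynomial ring over `K`, which is integrally closed and whose only elements
algebraic over `K` are constants, so `c ∈ K`.
-/

/-- A field extension `K ⊆ L` is purely transcendental if `L` is generated, as a field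
extension of `K`, by an algebraically independent set. -/
def IsPurelyTranscendental (K L : Type*) [Field K] [Field L] [Algebra K L] : Prop :=
  ∃ S : Set L, AlgebraicIndependent K ((↑) : S → L) ∧ IntermediateField.adjoin K S = ⊤

/-- An ordered basis `v` of a `K`-subspace `A` of `L` is matched to an ordered basis `w`
of a `K`-subspace `B` of `L` if for each `i`, `(v i)⁻¹ • A ∩ B` is contained in the
`K`-span of `{w j : j ≠ i}`. -/
def MatchedBases {K L : Type*} [Field K] [Field L] [Algebra K L]
    {A B : Submodule K L} {n : ℕ} (v : Module.Basis (Fin n) K A) (w : Module.Basis (Fin n) K B) : Prop :=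
  ∀ i : Fin n, ∀ y : L, y ∈ B → (∃ x ∈ A, y = ((v i : L))⁻¹ * x) →
    y ∈ Submodule.span K ((fun j : Fin n => (w j : L)) '' {j : Fin n | j ≠ i})

/-- A strong matching from `A` to `B` is a `K`-linear isomorphism `f : A → B` such that
every ordered basis `v` of `A` is matched to the ordered basis `f (v)` of `B`. -/
def IsStrongMatching {K L : Type*} [Field K] [Field L] [Algebra K L]
    {A B : Submodule K L} (f : A ≃ₗ[K] B) : Prop :=
  ∀ v : Module.Basis (Fin (Module.finrank K A)) K A, MatchedBases v (v.map f)

/-- Two `K`-linear isomorphisms `f, g : A → B` are equivalent if there is a `K`-linear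
automorphism `φ : A → A` with `a * f a = φ a * g (φ a)` for all `a ∈ A`. -/
def AreEquivalent {K L : Type*} [Field K] [Field L] [Algebra K L]
    {A B : Submodule K L} (f g : A ≃ₗ[K] B) : Prop :=
  ∃ φ : A ≃ₗ[K] A, ∀ a : A, (a : L) * ((f a : ↥B) : L) =
    ((φ a : ↥A) : L) * ((g (φ a) : ↥B) : L)

theorem MvPolynomial.exists_C_eq_of_isAlgebraic_fin {R : Type*} [CommRing R] [IsDomain R] :
    ∀ {n : ℕ} {p : MvPolynomial (Fin n) R}, IsAlgebraic R p → ∃ r : R, C r = p := by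
  intro n
  induction n with
  | zero => exact fun {p} _ => C_surjective (Fin 0) p
  | succ n ih =>
    intro p hp
    set e := finSuccEquiv R n
    have hpe : IsAlgebraic (MvPolynomial (Fin n) R) (e p) :=
      (hp.algHom e.toAlgHom).extendScalars (C_injective _ _)
    have hdeg : (e p).natDegree = 0 := by
      by_contra hd
      have hne : e p ≠ 0 := fun h0 => hd (by simp [h0])
      exact Polynomial.transcendental (e p) hd
        (mem_nonZeroDivisors_of_ne_zero (Polynomial.leadingCoeff_ne_zero.mpr hne)) hpe
    obtain ⟨q, hq⟩ := Polynomial.natDegree_eq_zero.mp hdeg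
    have hqalg : IsAlgebraic R q :=
      (isAlgebraic_algHom_iff (Polynomial.CAlgHom (R := R)) Polynomial.C_injective).mp
        (hq ▸ hp.algHom e.toAlgHom)
    obtain ⟨r, rfl⟩ := ih hqalg
    refine ⟨r, e.injective ?_⟩
    rw [← algebraMap_eq, AlgEquiv.commutes, Polynomial.algebraMap_apply, algebraMap_eq, hq]

theorem MvPolynomial.exists_C_eq_of_isAlgebraic {R σ : Type*} [CommRing R] [IsDomain R]
    {p : MvPolynomial σ R} (hp : IsAlgebraic R p) : ∃ r : R, C r = p := by
  obtain ⟨n, f, hf, q, rfl⟩ := exists_fin_rename p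
  obtain ⟨r, rfl⟩ := exists_C_eq_of_isAlgebraic_fin
    ((isAlgebraic_algHom_iff (rename f) (rename_injective f hf)).mp hp)
  exact ⟨r, (rename_C f r).symm⟩

theorem MvPolynomial.exists_algebraMap_eq_of_isAlgebraic_fractionRing {K σ : Type*} [Field K]
    {d : FractionRing (MvPolynomial σ K)} (hd : IsAlgebraic K d) :
    ∃ k : K, algebraMap K _ k = d := by
  have hd' : IsIntegral (MvPolynomial σ K) d := (isAlgebraic_iff_isIntegral.mp hd).tower_top
  obtain ⟨p, rfl⟩ := IsIntegrallyClosed.isIntegral_iff.mp hd'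
  have hp : IsAlgebraic K p :=
    (isAlgebraic_algHom_iff (IsScalarTower.toAlgHom K (MvPolynomial σ K) _)
      (IsFractionRing.injective _ _)).mp hd
  obtain ⟨k, rfl⟩ := exists_C_eq_of_isAlgebraic hp
  exact ⟨k, IsScalarTower.algebraMap_apply K (MvPolynomial σ K) _ k⟩

theorem IsPurelyTranscendental.exists_algebraMap_eq_of_isAlgebraic {K L : Type*} [Field K]
    [Field L] [Algebra K L] (hKL : IsPurelyTranscendental K L) {c : L} (hc : IsAlgebraic K c) :
    ∃ k : K, algebraMap K L k = c := by
  obtain ⟨S, hS, hTop⟩ := hKL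
  let E : FractionRing (MvPolynomial S K) ≃ₐ[K] L :=
    hS.aevalEquivField.trans <| (IntermediateField.equivOfEq
      (by rw [Subtype.range_coe, hTop])).trans IntermediateField.topEquiv
  obtain ⟨k, hk⟩ :=
    MvPolynomial.exists_algebraMap_eq_of_isAlgebraic_fractionRing (hc.algHom E.symm.toAlgHom)
  exact ⟨k, by rw [← E.commutes, hk]; exact E.apply_symm_apply c⟩

theorem AddMonoidHom.mul_swap_eq_of_forall_mul_eq_sq {M R : Type*} [AddCommMonoid M] [CommRing R]
    [IsReduced R] {u v p : M →+ R} (h : ∀ x, u x * v x = p x ^ 2) (x y : M) :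
    u x * v y = u y * v x := by
  have hxy := h (x + y)
  simp only [map_add] at hxy
  -- polarization gives `u x * v y + u y * v x = 2 p x p y`, so the difference squares to zero
  refine sub_eq_zero.mp (IsNilpotent.eq_zero ⟨2, ?_⟩)
  linear_combination (u x * v y + u y * v x + 2 * p x * p y) * (hxy - h x - h y)
    - 4 * (u y * v y) * h x - 4 * p x ^ 2 * h y

theorem exists_eq_mul_of_forall_mul_swap_eq {M L : Type*} [Field L] {u v : M → L}
    (h : ∀ x y, u x * v y = u y * v x) {x₀ : M} (hx₀ : u x₀ ≠ 0) :
    ∃ c : L, ∀ y, v y = c * u y :=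
  ⟨v x₀ / u x₀, fun y => by rw [div_mul_eq_mul_div, eq_div_iff hx₀, mul_comm, h, mul_comm]⟩

theorem matchedBases_of_forall_mul_mem_eq_zero {K L : Type*} [Field K] [Field L] [Algebra K L]
    {A B : Submodule K L} (hAB : ∀ x : L, (∃ a ∈ A, ∃ b ∈ B, x = a * b) → x ∈ A → x = 0)
    {n : ℕ} (v : Module.Basis (Fin n) K A) (w : Module.Basis (Fin n) K B) : MatchedBases v w := by
  rintro i y hyB ⟨x, hxA, rfl⟩
  have hvi : (v i : L) ≠ 0 := fun h0 => v.ne_zero i (Subtype.ext h0)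
  have hx : x = (v i : L) * ((v i : L)⁻¹ * x) := by rw [mul_inv_cancel_left₀ hvi]
  rw [hAB x ⟨v i, (v i).2, _, hyB, hx⟩ hxA, mul_zero]
  exact Submodule.zero_mem _

theorem exists_linearEquiv_apply_eq_mul {K L : Type*} [Field K] [Field L] [Algebra K L]
    {A B : Submodule K L} {α : L} (hα : α ≠ 0) (hBα : (B : Set L) = (α * ·) '' (A : Set L)) :
    ∃ w : A ≃ₗ[K] B, ∀ a : A, (w a : L) = α * a := by
  have hmap : A.map (LinearMap.mulLeft K α) = B :=
    SetLike.coe_injective (by rw [Submodule.map_coe, hBα]; rfl)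
  exact ⟨(A.equivMapOfInjective _ (mul_right_injective₀ hα)).trans (LinearEquiv.ofEq _ _ hmap),
    fun _ => rfl⟩

theorem IsPurelyTranscendental.exists_eq_algebraMap_mul_of_mul_eq_sq {K L : Type*} [Field K]
    [Field L] [Algebra K L] (hKL : IsPurelyTranscendental K L) {A : Submodule K L} (hA : A ≠ ⊥)
    [FiniteDimensional K A] {G φ : A →ₗ[K] A} (hsq : ∀ a : A, (a : L) * G a = (φ a : L) ^ 2) :
    ∃ k : K, ∀ a : A, (G a : L) = algebraMap K L k * a := by
  obtain ⟨x₀, hx₀A, hx₀⟩ := (Submodule.ne_bot_iff A).mp hA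
  obtain ⟨c, hc⟩ := exists_eq_mul_of_forall_mul_swap_eq (x₀ := (⟨x₀, hx₀A⟩ : A)) (u := fun a : A => (a : L))
    (AddMonoidHom.mul_swap_eq_of_forall_mul_eq_sq (u := A.subtype.toAddMonoidHom)
      (v := (A.subtype ∘ₗ G).toAddMonoidHom) (p := (A.subtype ∘ₗ φ).toAddMonoidHom) hsq) hx₀
  have hcA : ∀ a ∈ A, c • a ∈ A := fun a ha => by
    rw [smul_eq_mul, ← show (G ⟨a, ha⟩ : L) = c * a from hc ⟨a, ha⟩]
    exact (G _).2
  obtain ⟨k, rfl⟩ := hKL.exists_algebraMap_eq_of_isAlgebraic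
    (isIntegral_of_smul_mem_submodule A hA (Module.Finite.iff_fg.mp ‹_›) c hcA).isAlgebraic
  exact ⟨k, hc⟩

theorem stmt16_general {K L : Type*} [Field K] [Field L] [Algebra K L]
    (hKL : IsPurelyTranscendental K L)
    (A B : Submodule K L) (hA : A ≠ ⊥)
    [FiniteDimensional K A]
    (hAB : ∀ x : L, (∃ a ∈ A, ∃ b ∈ B, x = a * b) → x ∈ A → x = 0)
    (α : L) (hα : α ≠ 0) (hBα : (B : Set L) = (α * ·) '' (A : Set L)) :
    ∃ w : A ≃ₗ[K] B, (∀ a : A, ((w a : ↥B) : L) = α * (a : L)) ∧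
      IsStrongMatching w ∧
      ∀ h : A ≃ₗ[K] B, IsStrongMatching h → AreEquivalent h w →
        ∃ c : K, ∀ a : A, ((h a : ↥B) : L) = algebraMap K L c * ((w a : ↥B) : L) := by
  obtain ⟨w, hw⟩ := exists_linearEquiv_apply_eq_mul hα hBα
  refine ⟨w, hw, fun v => matchedBases_of_forall_mul_mem_eq_zero hAB v _, ?_⟩
  rintro h - ⟨φ, hφ⟩
  have hh : ∀ a : A, (h a : L) = α * (w.symm (h a) : L) := fun a => by
    rw [← hw, w.apply_symm_apply]
  obtain ⟨k, hk⟩ := hKL.exists_eq_algebraMap_mul_of_mul_eq_sq hA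
    (G := w.symm.toLinearMap ∘ₗ h.toLinearMap) (φ := φ.toLinearMap) fun a => by
      refine mul_left_cancel₀ hα ?_
      have := hφ a
      rw [hh, hw] at this
      simp only [LinearMap.comp_apply, LinearEquiv.coe_coe]
      linear_combination this
  refine ⟨k, fun a => ?_⟩
  have := hk a
  simp only [LinearMap.comp_apply, LinearEquiv.coe_coe] at this
  rw [hh, this, hw]
  ring

/-- Let `K ⊆ L` be purely transcendental, `A`, `B` nonzero finite-dimensional
`K`-subspaces of `L` of the same dimension with `AB ∩ A = {0}` and `B = α • A` for some
nonzero `α ∈ L`. Then the multiplication-by-`α` map `w : A → B` is an acyclic matching: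
it is a strong matching, and every strong matching `h : A → B` equivalent to `w`
satisfies `h = c • w` for some `c ∈ K`. -/
theorem stmt16 {K L : Type*} [Field K] [Field L] [Algebra K L]
    (hKL : IsPurelyTranscendental K L)
    (A B : Submodule K L) (hA : A ≠ ⊥) (hB : B ≠ ⊥)
    [FiniteDimensional K A] [FiniteDimensional K B]
    (hdim : Module.finrank K A = Module.finrank K B)
    (hAB : ∀ x : L, (∃ a ∈ A, ∃ b ∈ B, x = a * b) → x ∈ A → x = 0)
    (α : L) (hα : α ≠ 0) (hBα : (B : Set L) = (α * ·) '' (A : Set L)) :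
    ∃ w : A ≃ₗ[K] B, (∀ a : A, ((w a : ↥B) : L) = α * (a : L)) ∧
      IsStrongMatching w ∧
      ∀ h : A ≃ₗ[K] B, IsStrongMatching h → AreEquivalent h w →
        ∃ c : K, ∀ a : A, ((h a : ↥B) : L) = algebraMap K L c * ((w a : ↥B) : L) :=
  stmt16_general hKL A B hA hAB α hα hBα
end

section
/- Let L be a purely transcendental field extension of a field K. Then the extension K ⊆ L satisfies the linear acyclic matching property: for every pair A and B of nonzero K-subspaces of L of the same finite dimension with AB ∩ A = {0}, there exists at least one acyclic matching from A to B. -/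
/-- An acyclic matching from `A` to `B` is a strong matching `f : A → B` such that every
strong matching `g : A → B` equivalent to `f` satisfies `f = c • g` for some `c ∈ K`. -/
def IsAcyclicLinearMatching {K L : Type*} [Field K] [Field L] [Algebra K L]
    {A B : Submodule K L} (f : A ≃ₗ[K] B) : Prop :=
  IsStrongMatching f ∧
    ∀ g : A ≃ₗ[K] B, IsStrongMatching g → AreEquivalent g f →
      ∃ c : K, ∀ a : A, ((f a : ↥B) : L) = algebraMap K L c * ((g a : ↥B) : L)

/-!
Since `AB ∩ A = 0`, every set `a⁻¹A ∩ B` is zero, so every linear isomorphism `A → B` is a strong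
matching. If `g` is equivalent to `f` via `φ`, the quadratic form `a ↦ a g(a)` factors as
`φ(a) f(φ(a))`; polarizing shows that `φ` or `f ∘ φ` is multiplication by an element of `L`.
Taking `f` to be multiplication by `v₀` when `B = v₀ A` (and arbitrary otherwise) reduces the second
case to the first. Then `φ = u · id` with `uA ⊆ A`, so `u` is integral over `K`, hence lies in `K`
because `K` is algebraically closed in the rational function field `L`; finally `g = u² f`.
-/

theorem forall_eq_or_forall_eq_of_forall_eq_or_eq {X Y Z : Type*} (ρ : X → Y) (σ : X → Z)
    (h : ∀ x y, ρ x = ρ y ∨ σ x = σ y) : (∀ x y, ρ x = ρ y) ∨ ∀ x y, σ x = σ y := by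
  refine or_iff_not_imp_left.2 fun hρ => ?_
  simp only [not_forall] at hρ
  obtain ⟨x₁, x₂, hx⟩ := hρ
  have hσ : ∀ y, σ y = σ x₁ := fun y => by
    rcases h y x₁ with h₁ | h₁
    · rcases h y x₂ with h₂ | h₂
      · exact absurd (h₁.symm.trans h₂) hx
      · exact h₂.trans ((h x₁ x₂).resolve_left hx).symm
    · exact h₁
  exact fun x y => (hσ x).trans (hσ y).symm

section Factorization

variable {K L : Type*} [Field K] [Field L] [Algebra K L] {A : Submodule K L}

theorem Submodule.exists_forall_eq_mul_of_div_eq (r : A →ₗ[K] L)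
    (h : ∀ a b : A, (a : L) ≠ 0 → (b : L) ≠ 0 → r a / a = r b / b) :
    ∃ u : L, ∀ a : A, r a = u * a := by
  by_cases hA : ∃ a₀ : A, (a₀ : L) ≠ 0
  · obtain ⟨a₀, ha₀⟩ := hA
    refine ⟨r a₀ / a₀, fun a => ?_⟩
    rcases eq_or_ne (a : L) 0 with ha | ha
    · simp [Submodule.coe_eq_zero.mp ha]
    · rw [← h a a₀ ha ha₀, div_mul_cancel₀ _ ha]
  · simp only [not_exists, not_not, Submodule.coe_eq_zero] at hA
    exact ⟨0, fun a => by simp [hA a]⟩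

theorem Submodule.exists_mul_or_exists_mul_of_mul_eq_mul (q r s : A →ₗ[K] L)
    (h : ∀ a : A, (a : L) * q a = r a * s a) :
    (∃ u : L, ∀ a : A, r a = u * a) ∨ ∃ v : L, ∀ a : A, s a = v * a := by
  have polar : ∀ a b : A, (a : L) * q b + b * q a = r a * s b + r b * s a := fun a b => by
    have hab := h (a + b)
    simp only [Submodule.coe_add, map_add] at hab
    linear_combination hab - h a - h b
  have cross : ∀ a b : A, (a : L) ≠ 0 → (b : L) ≠ 0 → r a / a = r b / b ∨ s a / a = s b / b := by
    intro a b ha hb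
    have : ((a : L) * r b - b * r a) * ((a : L) * s b - b * s a) = 0 := by
      linear_combination (a : L) * b * polar a b - (a : L) ^ 2 * h b - (b : L) ^ 2 * h a
    rw [div_eq_div_iff ha hb, div_eq_div_iff ha hb]
    rcases mul_eq_zero.mp this with h' | h'
    · left; linear_combination -h'
    · right; linear_combination -h'
  rcases forall_eq_or_forall_eq_of_forall_eq_or_eq (fun a : {a : A // (a : L) ≠ 0} => r a / a)
    (fun a => s a / a) (fun a b => cross a b a.2 b.2) with hr | hs
  · exact .inl <| Submodule.exists_forall_eq_mul_of_div_eq r fun a b ha hb => hr ⟨a, ha⟩ ⟨b, hb⟩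
  · exact .inr <| Submodule.exists_forall_eq_mul_of_div_eq s fun a b ha hb => hs ⟨a, ha⟩ ⟨b, hb⟩

end Factorization

open IntermediateField in
theorem IsPurelyTranscendental.exists_algEquiv {K L : Type*} [Field K] [Field L] [Algebra K L]
    (hKL : IsPurelyTranscendental K L) :
    ∃ S : Set L, Nonempty (FractionRing (MvPolynomial S K) ≃ₐ[K] L) := by
  obtain ⟨S, hind, htop⟩ := hKL
  rw [← Subtype.range_coe (s := S)] at htop
  exact ⟨S, ⟨(hind.aevalEquivField.trans (equivOfEq htop)).trans topEquiv⟩⟩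

theorem MvPolynomial.exists_algebraMap_eq_of_isIntegral {σ K : Type*} [Field K]
    {x : FractionRing (MvPolynomial σ K)} (hx : IsIntegral K x) :
    ∃ k : K, algebraMap K _ k = x := by
  -- `x` and `x⁻¹` lie in the integrally closed ring `MvPolynomial σ K`, so `x` is a unit there
  obtain ⟨p, hp⟩ := IsIntegrallyClosed.isIntegral_iff.mp (hx.tower_top (A := MvPolynomial σ K))
  rcases eq_or_ne x 0 with rfl | hx₀
  · exact ⟨0, map_zero _⟩
  obtain ⟨q, hq⟩ := IsIntegrallyClosed.isIntegral_iff.mp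
    (hx.inv.tower_top (A := MvPolynomial σ K))
  have hpq : p * q = 1 := IsFractionRing.injective _ (FractionRing (MvPolynomial σ K)) <| by
    rw [map_mul, hp, hq, mul_inv_cancel₀ hx₀, map_one]
  obtain ⟨k, -, rfl⟩ := MvPolynomial.isUnit_iff_eq_C_of_isReduced.mp (IsUnit.of_mul_eq_one _ hpq)
  exact ⟨k, by rw [← hp, ← MvPolynomial.algebraMap_eq, ← IsScalarTower.algebraMap_apply]⟩

theorem IsPurelyTranscendental.exists_algebraMap_eq_of_isIntegral {K L : Type*} [Field K]
    [Field L] [Algebra K L] (hKL : IsPurelyTranscendental K L) {u : L} (hu : IsIntegral K u) :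
    ∃ k : K, algebraMap K L k = u := by
  obtain ⟨S, ⟨e⟩⟩ := hKL.exists_algEquiv
  obtain ⟨k, hk⟩ := MvPolynomial.exists_algebraMap_eq_of_isIntegral (hu.map e.symm)
  exact ⟨k, by rw [← e.apply_symm_apply u, ← hk, AlgEquiv.commutes]⟩

theorem IsPurelyTranscendental.exists_algebraMap_eq_of_forall_mul_mem {K L : Type*} [Field K]
    [Field L] [Algebra K L] (hKL : IsPurelyTranscendental K L) {A : Submodule K L} (hA : A ≠ ⊥)
    [FiniteDimensional K A] {u : L} (hu : ∀ x ∈ A, u * x ∈ A) : ∃ k : K, algebraMap K L k = u :=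
  hKL.exists_algebraMap_eq_of_isIntegral <|
    isIntegral_of_smul_mem_submodule A hA ((Submodule.fg_iff_finiteDimensional A).mpr ‹_›) u hu

section Matching

variable {K L : Type*} [Field K] [Field L] [Algebra K L] {A B : Submodule K L}

theorem isStrongMatching_of_mul_disjoint
    (hAB : ∀ x : L, (∃ a ∈ A, ∃ b ∈ B, x = a * b) → x ∈ A → x = 0) (f : A ≃ₗ[K] B) :
    IsStrongMatching f := by
  rintro v i y hyB ⟨x, hxA, rfl⟩
  have hvi : (v i : L) ≠ 0 := by simpa using v.ne_zero i
  have hx : x = 0 := hAB x ⟨v i, (v i).2, _, hyB, (mul_inv_cancel_left₀ hvi x).symm⟩ hxA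
  simp [hx]

theorem exists_linearEquiv_forall_exists_mul [FiniteDimensional K A] [FiniteDimensional K B]
    (hAB : Module.finrank K A = Module.finrank K B) :
    ∃ f : A ≃ₗ[K] B, ∀ (φ : A ≃ₗ[K] A) (v : L), (∀ a : A, (f (φ a) : L) = v * a) →
      ∃ u : L, ∀ a : A, (φ a : L) = u * a := by
  by_cases hmul : ∃ (e : A ≃ₗ[K] B) (v₀ : L), ∀ a : A, (e a : L) = v₀ * a
  · obtain ⟨e, v₀, he⟩ := hmul
    refine ⟨e, fun φ v hv => ⟨v / v₀, fun a => ?_⟩⟩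
    have hφa : v₀ * φ a = v * a := (he (φ a)).symm.trans (hv a)
    rcases eq_or_ne v₀ 0 with rfl | hv₀
    · have : e (φ a) = 0 := Subtype.ext (by simpa using he (φ a))
      simp [e.map_eq_zero_iff.mp this]
    · field_simp
      linear_combination hφa
  · obtain ⟨f⟩ := FiniteDimensional.nonempty_linearEquiv_of_finrank_eq hAB
    exact ⟨f, fun φ v hv => absurd ⟨φ.trans f, v, hv⟩ hmul⟩

theorem exists_eq_algebraMap_mul_of_forall_mul_eq (f g : A ≃ₗ[K] B) (φ : A ≃ₗ[K] A) (k : K)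
    (hφk : ∀ a : A, (φ a : L) = algebraMap K L k * a)
    (hφ : ∀ a : A, (a : L) * g a = φ a * f (φ a)) :
    ∃ c : K, ∀ a : A, (f a : L) = algebraMap K L c * g a := by
  refine ⟨(k * k)⁻¹, fun a => ?_⟩
  rcases eq_or_ne (a : L) 0 with ha | ha
  · simp [Submodule.coe_eq_zero.mp ha]
  have hk : algebraMap K L k ≠ 0 := fun hk => by
    have : φ a = 0 := Subtype.ext (by simp [hφk, hk])
    exact ha (by simp [φ.map_eq_zero_iff.mp this])
  have hφa : φ a = k • a := Subtype.ext <| by rw [hφk, Submodule.coe_smul, Algebra.smul_def]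
  have hga : (g a : L) = algebraMap K L k * algebraMap K L k * f a := by
    apply mul_left_cancel₀ ha
    rw [hφ, hφa, map_smul, Submodule.coe_smul, Submodule.coe_smul, Algebra.smul_def,
      Algebra.smul_def]
    ring
  rw [hga, map_inv₀, map_mul, inv_mul_cancel_left₀ (mul_ne_zero hk hk)]

end Matching

/-- A purely transcendental field extension `K ⊆ L` satisfies the linear acyclic matching
property: for every pair `A`, `B` of nonzero `K`-subspaces of `L` of the same finite
dimension with `AB ∩ A = {0}`, there is at least one acyclic matching from `A` to `B`. -/
theorem stmt17 {K L : Type*} [Field K] [Field L] [Algebra K L]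
    (hKL : IsPurelyTranscendental K L) :
    ∀ A B : Submodule K L, A ≠ ⊥ → B ≠ ⊥ →
      FiniteDimensional K A → FiniteDimensional K B →
      Module.finrank K A = Module.finrank K B →
      (∀ x : L, (∃ a ∈ A, ∃ b ∈ B, x = a * b) → x ∈ A → x = 0) →
      ∃ f : A ≃ₗ[K] B, IsAcyclicLinearMatching f := by
  intro A B hA _ _ _ hrank hAB
  obtain ⟨f, hf⟩ := exists_linearEquiv_forall_exists_mul hrank
  refine ⟨f, isStrongMatching_of_mul_disjoint hAB f, fun g _ ⟨φ, hφ⟩ => ?_⟩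
  obtain ⟨u, hu⟩ : ∃ u : L, ∀ a : A, (φ a : L) = u * a :=
    (Submodule.exists_mul_or_exists_mul_of_mul_eq_mul (B.subtype ∘ₗ (g : A →ₗ[K] B))
      (A.subtype ∘ₗ (φ : A →ₗ[K] A)) (B.subtype ∘ₗ (f : A →ₗ[K] B) ∘ₗ (φ : A →ₗ[K] A)) hφ).elim id
      fun ⟨v, hv⟩ => hf φ v hv
  obtain ⟨k, rfl⟩ := hKL.exists_algebraMap_eq_of_forall_mul_mem (u := u) hA fun x hx =>
    hu ⟨x, hx⟩ ▸ (φ ⟨x, hx⟩).2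
  exact exists_eq_algebraMap_mul_of_forall_mul_eq f g φ k hu hφ
end
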